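/- arXiv:math/0111170 — 2 statements merged into one kernel-verified Lean document; each statement's English description precedes it below -/
import Mathlib

section
/- In the disordered ferromagnet on the hexagonal lattice ℍ with couplings satisfying J_{x,y} ∈ [0,1] for every edge and external field h > 1.5: for every initial configuration, every legal flip sequence, and every site x, the spin at x is flipped at most 7 times during the sequence. -/
open MeasureTheory ENNReal

/-- Sites of the hexagonal (honeycomb) lattice ℍ, coordinatized by ℤ × ℤ. -/
abbrev Site : Type := ℤ × ℤ

/-- A spin configuration: `true` stands for spin +1, `false` for spin −1. -/
abbrev Config : Type := Site → Bool

/-- The three neighbors of a site: `(i,j)` is adjacent to `(i−1,j)`, `(i+1,j)`, and to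
`(i,j+1)` if `i+j` is even, to `(i,j−1)` if `i+j` is odd. -/
def nbrs (x : Site) : List Site :=
  [(x.1 - 1, x.2), (x.1 + 1, x.2),
   if Even (x.1 + x.2) then (x.1, x.2 + 1) else (x.1, x.2 - 1)]

/-- Adjacency in the hexagonal lattice. -/
def Adj (x y : Site) : Prop := y ∈ nbrs x

instance : DecidableRel Adj := fun x y => by unfold Adj; infer_instance

/-- The spin value of a site as a real number: `true` ↦ +1, `false` ↦ −1. -/
def val (b : Bool) : ℝ := if b then 1 else -1

/-- The energy change of a flip at `x` for the Hamiltonian with couplings `J` and external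
field `h`:  ΔH_x(σ) = 2 Σ_{y∈N(x)} J_{x,y} σ_x σ_y + 2 h σ_x. -/
def deltaH (J : Site → Site → ℝ) (h : ℝ) (σ : Config) (x : Site) : ℝ :=
  2 * ((nbrs x).map (fun y => J x y * val (σ x) * val (σ y))).sum + 2 * h * val (σ x)

/-- Flipping at `x` is legal in the disordered model iff it strictly lowers the energy. -/
def LegalDis (J : Site → Site → ℝ) (h : ℝ) (σ : Config) (x : Site) : Prop :=
  deltaH J h σ x < 0

/-- The configuration obtained from `σ` by flipping the spin at `x`. -/
def flipAt (σ : Config) (x : Site) : Config := Function.update σ x (!(σ x))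

/-- `η 0, η 1, …` is a legal flip sequence of the zero-temperature dynamics of the
disordered model, of length `m ∈ ℕ∞` (`m = ⊤` for an infinite sequence): each configuration
is obtained from the previous one by a single legal flip. -/
def IsLegalFlipSeqDis (J : Site → Site → ℝ) (h : ℝ) (η : ℕ → Config) (m : ℕ∞) : Prop :=
  ∀ n : ℕ, (n : ℕ∞) + 1 ≤ m → ∃ x, LegalDis J h (η n) x ∧ η (n + 1) = flipAt (η n) x

/-! A `+` spin at `z` may flip only when its local field `S_z = Σ_{u ∈ N(z)} J_{z,u} σ_u` is
below `-h`, a `-` spin only when `S_z > -h`.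

If `u` flips from `+` to `-` while a neighbour `x` is `+`, its two other couplings satisfy
`J_{u,y₁} + J_{u,y₂} > h + J_{u,x}`, so in particular `J_{u,x} < 2 - h < 1/2`. When `u` later
returns to `+`, one of `y₁, y₂` is `+`, and since `h > 3/2` neither `u` nor that partner can
flip as long as both are `+`: the pair is frozen, and `u` never flips from `+` to `-` again.

Between two `+ → -` flips of `x`, the field at `x` must fall from above `-h` (its value at the
intervening `- → +` flip) to below `-h`, and only a `+ → -` flip of a neighbour of `x`, made
while `x` is `+`, lowers it. Such a neighbour has `J_{x,u} < 1/2`, whereas the first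
`+ → -` flip of `x` needs a neighbour with `J_{x,y} > 1/2`. Hence `x` flips from `+` to `-` at
most `1 + 2` times, from `-` to `+` at most `3 + 1` times. -/

theorem mem_nbrs_comm {x y : Site} : y ∈ nbrs x ↔ x ∈ nbrs y := by
  obtain ⟨i, j⟩ := x; obtain ⟨a, b⟩ := y
  by_cases h1 : Even (i + j) <;> by_cases h2 : Even (a + b) <;>
    simp only [nbrs, List.mem_cons, List.not_mem_nil, or_false, h1, h2, if_true, if_false,
      Prod.mk.injEq] <;>
    rw [Int.even_iff] at * <;> omega

theorem notMem_nbrs_self (x : Site) : x ∉ nbrs x := by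
  obtain ⟨i, j⟩ := x
  by_cases h1 : Even (i + j) <;>
    simp only [nbrs, List.mem_cons, List.not_mem_nil, or_false, h1, if_true, if_false,
      Prod.mk.injEq] <;> omega

theorem nbrs_perm_of_mem {z u : Site} (hu : u ∈ nbrs z) : ∃ v w, (nbrs z).Perm [u, v, w] := by
  have hlen : ((nbrs z).erase u).length = 2 := by rw [List.length_erase_of_mem hu]; rfl
  obtain ⟨v, w, hvw⟩ := List.length_eq_two.mp hlen
  exact ⟨v, w, hvw ▸ List.perm_cons_erase hu⟩

@[simp] theorem val_true : val true = 1 := rfl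

@[simp] theorem val_false : val false = -1 := rfl

theorem neg_le_mul_val {j : ℝ} (hj : 0 ≤ j) (b : Bool) : -j ≤ j * val b := by
  cases b <;> simp; linarith

theorem mul_val_le {j : ℝ} (hj : 0 ≤ j) (b : Bool) : j * val b ≤ j := by
  cases b <;> simp; linarith

@[simp] theorem flipAt_self (σ : Config) (z : Site) : flipAt σ z z = !σ z := by
  simp [flipAt]

theorem flipAt_of_ne (σ : Config) {z u : Site} (hu : u ≠ z) : flipAt σ z u = σ u :=
  Function.update_of_ne hu _ _

theorem eq_of_flipAt_ne {σ : Config} {z u : Site} (h : flipAt σ z u ≠ σ u) : u = z := by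
  by_contra hne
  exact h (flipAt_of_ne σ hne)

def localField (J : Site → Site → ℝ) (σ : Config) (z : Site) : ℝ :=
  ((nbrs z).map fun u => J z u * val (σ u)).sum

section LocalField

variable {J : Site → Site → ℝ} {h : ℝ} {σ : Config} {z : Site}

theorem deltaH_eq_localField :
    deltaH J h σ z = 2 * val (σ z) * (localField J σ z + h) := by
  simp only [deltaH, localField, nbrs, List.map_cons, List.map_nil, List.sum_cons,
    List.sum_nil, add_zero]
  ring

theorem LegalDis.localField_lt (hl : LegalDis J h σ z) (hz : σ z = true) :
    localField J σ z < -h := by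
  rw [LegalDis, deltaH_eq_localField, hz, val_true] at hl
  linarith

theorem LegalDis.neg_lt_localField (hl : LegalDis J h σ z) (hz : σ z = false) :
    -h < localField J σ z := by
  rw [LegalDis, deltaH_eq_localField, hz, val_false] at hl
  linarith

theorem localField_of_perm {u v w : Site} (hp : (nbrs z).Perm [u, v, w]) :
    localField J σ z = J z u * val (σ u) + J z v * val (σ v) + J z w * val (σ w) := by
  rw [localField, (hp.map _).sum_eq]
  simp only [List.map_cons, List.map_nil, List.sum_cons, List.sum_nil]
  ring

theorem localField_congr {τ : Config} (hστ : ∀ u ∈ nbrs z, σ u = τ u) :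
    localField J σ z = localField J τ z :=
  congrArg List.sum (List.map_congr_left fun u hu => by rw [hστ u hu])

theorem localField_flipAt_of_notMem {s : Site} (hs : s ∉ nbrs z) :
    localField J (flipAt σ s) z = localField J σ z :=
  localField_congr fun _ hu => flipAt_of_ne σ (ne_of_mem_of_not_mem hu hs)

variable (hJ : ∀ a b, Adj a b → 0 ≤ J a b)
include hJ

theorem sub_sub_le_localField {u v w : Site} (hp : (nbrs z).Perm [u, v, w])
    (hu : σ u = true) : J z u - J z v - J z w ≤ localField J σ z := by
  rw [localField_of_perm hp, hu, val_true]
  linarith [neg_le_mul_val (hJ z v (hp.symm.subset (by simp))) (σ v),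
    neg_le_mul_val (hJ z w (hp.symm.subset (by simp))) (σ w)]

theorem localField_le_sub_sub {u v w : Site} (hp : (nbrs z).Perm [u, v, w])
    (hv : σ v = false) (hw : σ w = false) : localField J σ z ≤ J z u - J z v - J z w := by
  rw [localField_of_perm hp, hv, hw, val_false]
  linarith [mul_val_le (hJ z u (hp.symm.subset (by simp))) (σ u)]

theorem localField_le_flipAt (s : Site) (hs : σ s = false) :
    localField J σ z ≤ localField J (flipAt σ s) z := by
  refine List.sum_le_sum fun u hu => ?_
  by_cases hus : u = s
  · subst hus
    simp [hs, hJ z u hu]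
  · rw [flipAt_of_ne σ hus]

theorem mem_nbrs_of_localField_flipAt_lt {s : Site}
    (hlt : localField J (flipAt σ s) z < localField J σ z) : s ∈ nbrs z ∧ σ s = true := by
  constructor
  · by_contra hs
    exact hlt.ne (localField_flipAt_of_notMem hs)
  · by_contra hs
    exact (localField_le_flipAt hJ s (by simpa using hs)).not_gt hlt

end LocalField

section Couplings

variable {J : Site → Site → ℝ} {h : ℝ} {σ : Config}

theorem exists_half_lt_coupling (hJ : ∀ a b, Adj a b → J a b ∈ Set.Icc (0 : ℝ) 1)
    (hh : 1.5 < h) {x : Site} (hx : localField J σ x < -h) : ∃ y ∈ nbrs x, 1 / 2 < J x y := by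
  by_contra! hsmall
  obtain ⟨v, w, hp⟩ := nbrs_perm_of_mem (by simp [nbrs] : (x.1 - 1, x.2) ∈ nbrs x)
  have lower : ∀ y ∈ nbrs x, -(1 / 2) ≤ J x y * val (σ y) := fun y hy =>
    (neg_le_neg (hsmall y hy)).trans (neg_le_mul_val (hJ x y hy).1 _)
  rw [localField_of_perm hp] at hx
  linarith [lower _ (hp.symm.subset List.mem_cons_self), lower v (hp.symm.subset (by simp)),
    lower w (hp.symm.subset (by simp))]

theorem LegalDis.coupling_lt (hJ : ∀ a b, Adj a b → J a b ∈ Set.Icc (0 : ℝ) 1) {u x : Site}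
    (hl : LegalDis J h σ u) (hu : σ u = true) (hx : x ∈ nbrs u) (hxσ : σ x = true) :
    J u x < 2 - h := by
  obtain ⟨v, w, hp⟩ := nbrs_perm_of_mem hx
  have := sub_sub_le_localField (fun a b hab => (hJ a b hab).1) hp hxσ
  linarith [hl.localField_lt hu, (hJ u v (hp.symm.subset (by simp))).2,
    (hJ u w (hp.symm.subset (by simp))).2]

theorem LegalDis.exists_partners (hJ : ∀ a b, Adj a b → 0 ≤ J a b) {z x : Site}
    (hl : LegalDis J h σ z) (hz : σ z = true) (hx : x ∈ nbrs z) (hxσ : σ x = true) :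
    ∃ y₁ y₂, (nbrs z).Perm [x, y₁, y₂] ∧ h + J z x < J z y₁ + J z y₂ := by
  obtain ⟨y₁, y₂, hp⟩ := nbrs_perm_of_mem hx
  exact ⟨y₁, y₂, hp, by linarith [sub_sub_le_localField hJ hp hxσ, hl.localField_lt hz]⟩

theorem exists_plus_partner (hJ : ∀ a b, Adj a b → 0 ≤ J a b) {z x y₁ y₂ : Site}
    (hp : (nbrs z).Perm [x, y₁, y₂]) (hJz : h + J z x < J z y₁ + J z y₂)
    (hσ : -h < localField J σ z) :
    ∃ ya yb, (nbrs z).Perm [x, ya, yb] ∧ h + J z x < J z ya + J z yb ∧ σ ya = true := by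
  cases h₁ : σ y₁
  · cases h₂ : σ y₂
    · linarith [localField_le_sub_sub hJ hp h₁ h₂]
    · exact ⟨y₂, y₁, hp.trans (.cons x (.swap y₂ y₁ [])), by linarith, h₂⟩
  · exact ⟨y₁, y₂, hp, hJz, h₁⟩

theorem not_legalDis_of_partner (hsym : ∀ a b, J a b = J b a)
    (hJ : ∀ a b, Adj a b → J a b ∈ Set.Icc (0 : ℝ) 1) (hh : 1.5 < h) {z x ya yb : Site}
    (hp : (nbrs z).Perm [x, ya, yb]) (hJz : h + J z x < J z ya + J z yb)
    (hz : σ z = true) (hya : σ ya = true) :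
    ¬LegalDis J h σ z ∧ ¬LegalDis J h σ ya := by
  have hJ₀ : ∀ a b, Adj a b → 0 ≤ J a b := fun a b hab => (hJ a b hab).1
  obtain ⟨hx₀, -⟩ := hJ z x (hp.symm.subset (by simp))
  obtain ⟨-, hyb₁⟩ := hJ z yb (hp.symm.subset (by simp))
  refine ⟨fun hl => ?_, fun hl => ?_⟩
  · have hp' : (nbrs z).Perm [ya, x, yb] := hp.trans (.swap ya x [yb])
    linarith [sub_sub_le_localField hJ₀ hp' hya, hl.localField_lt hz]
  · have hzya : z ∈ nbrs ya := mem_nbrs_comm.mp (hp.symm.subset (by simp))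
    linarith [hl.coupling_lt hJ hya hzya hz, hsym ya z]

end Couplings

theorem Nat.exists_last_of_le {p : ℕ → Prop} {a n : ℕ} (ha : p a) (hn : ¬p n) (han : a ≤ n) :
    ∃ w, a ≤ w ∧ w < n ∧ p w ∧ ∀ k, w < k → k ≤ n → ¬p k := by
  classical
  have hw := Nat.findGreatest_spec han ha
  refine ⟨Nat.findGreatest p n, Nat.le_findGreatest han ha, ?_, hw,
    fun k hk hkn => Nat.findGreatest_is_greatest hk hkn⟩
  exact (Nat.findGreatest_le n).lt_of_ne fun heq => hn (heq ▸ hw)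

theorem Nat.exists_map_succ_lt {α : Type*} [LinearOrder α] {f : ℕ → α} {a b : ℕ} (hab : a ≤ b)
    (hf : f b < f a) : ∃ k, a ≤ k ∧ k < b ∧ f (k + 1) < f k := by
  induction b, hab using Nat.le_induction with
  | base => exact absurd hf (lt_irrefl _)
  | succ b hab ih =>
    by_cases hb : f (b + 1) < f b
    · exact ⟨b, hab, b.lt_succ_self, hb⟩
    · obtain ⟨k, hak, hkb, hk⟩ := ih ((not_lt.mp hb).trans_lt hf)
      exact ⟨k, hak, hkb.trans b.lt_succ_self, hk⟩

theorem ENat.add_one_le_of_le {k n : ℕ} {m : ℕ∞} (hkn : k ≤ n) (hn : (n : ℕ∞) + 1 ≤ m) :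
    (k : ℕ∞) + 1 ≤ m :=
  le_trans (by gcongr) hn

theorem Set.encard_le_add_one_of_diff_min {s : Set ℕ} {c : ℕ∞}
    (hs : ∀ a ∈ s, (∀ b ∈ s, a ≤ b) → (s \ {a}).encard ≤ c) : s.encard ≤ c + 1 := by
  rcases s.eq_empty_or_nonempty with rfl | hne
  · simp
  · have hmem := Nat.sInf_mem hne
    rw [← Set.encard_sdiff_singleton_add_one hmem]
    gcongr
    exact hs _ hmem fun b hb => Nat.sInf_le hb

def flipsFrom (b : ℕ → Bool) (m : ℕ∞) (c : Bool) : Set ℕ :=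
  {n | (n : ℕ∞) + 1 ≤ m ∧ b n = c ∧ b (n + 1) ≠ c}

theorem encard_flipsFrom_le_add_one (b : ℕ → Bool) (m : ℕ∞) (c : Bool) :
    (flipsFrom b m c).encard ≤ (flipsFrom b m (!c)).encard + 1 := by
  refine Set.encard_le_add_one_of_diff_min fun q₀ hq₀ hmin => ?_
  have hprev : ∀ q ∈ flipsFrom b m c \ {q₀}, ∃ w ∈ flipsFrom b m (!c), w < q ∧
      ∀ q' ∈ flipsFrom b m c, q' < q → q' < w := by
    rintro q ⟨hq, hne⟩
    have hq₀q : q₀ + 1 ≤ q := (hmin q hq).lt_of_ne (Ne.symm hne)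
    obtain ⟨hqm, hqc, -⟩ := hq
    obtain ⟨w, -, hwq, hwc, hlast⟩ :=
      Nat.exists_last_of_le (p := fun k => b k ≠ c) hq₀.2.2 (not_not.mpr hqc) hq₀q
    have hw₁ : b (w + 1) = c := not_not.mp (hlast (w + 1) w.lt_succ_self hwq)
    refine ⟨w, ⟨ENat.add_one_le_of_le hwq.le hqm, Bool.eq_not_iff.mpr hwc, by simp [hw₁]⟩,
      hwq, fun q' hq' hq'q => ?_⟩
    by_contra! hwq'
    exact hlast (q' + 1) (by omega) hq'q hq'.2.2
  choose! f hf using hprev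
  refine Set.encard_le_encard_of_injOn (fun q hq => (hf q hq).1) (StrictMonoOn.injOn ?_)
  exact fun q₁ h₁ q₂ h₂ h => (hf q₁ h₁).2.1.trans ((hf q₂ h₂).2.2 q₁ h₁.1 h)

namespace IsLegalFlipSeqDis

variable {J : Site → Site → ℝ} {h : ℝ} {η : ℕ → Config} {m : ℕ∞}

theorem legalDis_of_ne (hseq : IsLegalFlipSeqDis J h η m) {n : ℕ} {x : Site}
    (hn : (n : ℕ∞) + 1 ≤ m) (hx : η (n + 1) x ≠ η n x) :
    LegalDis J h (η n) x ∧ η (n + 1) = flipAt (η n) x := by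
  obtain ⟨z, hl, hz⟩ := hseq n hn
  obtain rfl : x = z := eq_of_flipAt_ne (hz ▸ hx)
  exact ⟨hl, hz⟩

theorem legalDis_of_mem_flipsFrom (hseq : IsLegalFlipSeqDis J h η m) {x : Site} {n : ℕ}
    {c : Bool} (hn : n ∈ flipsFrom (η · x) m c) :
    LegalDis J h (η n) x ∧ η (n + 1) = flipAt (η n) x :=
  hseq.legalDis_of_ne hn.1 fun heq => hn.2.2 (heq.trans hn.2.1)

theorem invariant (hseq : IsLegalFlipSeqDis J h η m) {p : Config → Prop}
    (hp : ∀ σ z, p σ → LegalDis J h σ z → p (flipAt σ z)) {a n : ℕ} (ha : p (η a))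
    (han : a ≤ n) (hn : (n : ℕ∞) ≤ m) : p (η n) := by
  induction n, han using Nat.le_induction with
  | base => exact ha
  | succ n _ ih =>
    obtain ⟨z, hl, hz⟩ := hseq n (by exact_mod_cast hn)
    exact hz ▸ hp _ z (ih (le_trans (by simp) hn)) hl

theorem pair_stays_plus (hseq : IsLegalFlipSeqDis J h η m) {z y : Site}
    (hpair : ∀ σ : Config, σ z = true → σ y = true → ¬LegalDis J h σ z ∧ ¬LegalDis J h σ y)
    {a n : ℕ} (hz : η a z = true) (hy : η a y = true) (han : a ≤ n) (hn : (n : ℕ∞) ≤ m) :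
    η n z = true ∧ η n y = true := by
  refine hseq.invariant (p := fun σ => σ z = true ∧ σ y = true) (fun σ s ⟨hσz, hσy⟩ hl => ?_)
    ⟨hz, hy⟩ han hn
  have hsz : z ≠ s := by rintro rfl; exact (hpair σ hσz hσy).1 hl
  have hsy : y ≠ s := by rintro rfl; exact (hpair σ hσz hσy).2 hl
  exact ⟨(flipAt_of_ne σ hsz).trans hσz, (flipAt_of_ne σ hsy).trans hσy⟩

theorem notMem_flipsFrom_true_of_lt (hsym : ∀ a b, J a b = J b a)
    (hJ : ∀ a b, Adj a b → J a b ∈ Set.Icc (0 : ℝ) 1) (hh : 1.5 < h)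
    (hseq : IsLegalFlipSeqDis J h η m) {u x : Site} {t n : ℕ}
    (ht : t ∈ flipsFrom (η · u) m true) (hx : x ∈ nbrs u) (hxt : η t x = true) (htn : t < n) :
    n ∉ flipsFrom (η · u) m true := by
  intro hn
  have hJ₀ : ∀ a b, Adj a b → 0 ≤ J a b := fun a b hab => (hJ a b hab).1
  obtain ⟨y₁, y₂, hp, hJu⟩ :=
    (hseq.legalDis_of_mem_flipsFrom ht).1.exists_partners hJ₀ ht.2.1 hx hxt
  obtain ⟨w, -, hwn, hwu, hlast⟩ :=
    Nat.exists_last_of_le (p := fun k => η k u ≠ true) ht.2.2 (not_not.mpr hn.2.1) htn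
  have hwu' : η w u = false := by simpa using hwu
  have hw₁ : η (w + 1) u = true := not_not.mp (hlast _ w.lt_succ_self hwn)
  obtain ⟨hlw, hflw⟩ :=
    hseq.legalDis_of_ne (ENat.add_one_le_of_le hwn.le hn.1) (by rw [hw₁, hwu']; decide)
  obtain ⟨ya, yb, hp', hJu', hya⟩ :=
    exists_plus_partner hJ₀ hp hJu (hlw.neg_lt_localField hwu')
  have hpair := fun σ : Config => not_legalDis_of_partner (σ := σ) hsym hJ hh hp' hJu'
  have hyau : ya ≠ u := ne_of_mem_of_not_mem (hp'.symm.subset (by simp)) (notMem_nbrs_self u)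
  have hya₁ : η (w + 1) ya = true := by rw [hflw, flipAt_of_ne _ hyau, hya]
  obtain ⟨hnu, hnya⟩ := hseq.pair_stays_plus hpair hw₁ hya₁ hwn (le_trans le_self_add hn.1)
  exact (hpair (η n) hnu hnya).1 (hseq.legalDis_of_mem_flipsFrom hn).1

theorem exists_flip_nbr (hJ : ∀ a b, Adj a b → 0 ≤ J a b) (hseq : IsLegalFlipSeqDis J h η m)
    {x : Site} {p₀ p : ℕ} (hp₀ : p₀ ∈ flipsFrom (η · x) m true)
    (hp : p ∈ flipsFrom (η · x) m true) (hlt : p₀ < p) :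
    ∃ u ∈ nbrs x, ∃ k < p, (∀ p' ∈ flipsFrom (η · x) m true, p' < p → p' < k) ∧
      k ∈ flipsFrom (η · u) m true ∧ η k x = true := by
  obtain ⟨w, -, hwp, hwx, hlast⟩ :=
    Nat.exists_last_of_le (p := fun k => η k x ≠ true) hp₀.2.2 (not_not.mpr hp.2.1) hlt
  have hwx' : η w x = false := by simpa using hwx
  have hplus : ∀ k, w < k → k ≤ p → η k x = true := fun k hwk hkp => not_not.mp (hlast k hwk hkp)
  obtain ⟨hlw, hflw⟩ := hseq.legalDis_of_ne (ENat.add_one_le_of_le hwp.le hp.1)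
    (by rw [hplus (w + 1) w.lt_succ_self hwp, hwx']; decide)
  have hstart : -h < localField J (η (w + 1)) x := by
    rw [hflw, localField_flipAt_of_notMem (notMem_nbrs_self x)]
    exact hlw.neg_lt_localField hwx'
  have hend : localField J (η p) x < -h :=
    (hseq.legalDis_of_mem_flipsFrom hp).1.localField_lt hp.2.1
  obtain ⟨k, hwk, hkp, hdec⟩ :=
    Nat.exists_map_succ_lt (f := fun k => localField J (η k) x) hwp (hend.trans hstart)
  obtain ⟨s, -, hfs⟩ := hseq k (ENat.add_one_le_of_le hkp.le hp.1)
  rw [hfs] at hdec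
  obtain ⟨hsx, hsk⟩ := mem_nbrs_of_localField_flipAt_lt hJ hdec
  refine ⟨s, hsx, k, hkp, fun p' hp' hp'p => ?_,
    ⟨ENat.add_one_le_of_le hkp.le hp.1, hsk, by simp [hfs, hsk]⟩, hplus k hwk hkp.le⟩
  by_contra! hkp'
  exact hlast (p' + 1) (by omega) hp'p hp'.2.2

theorem encard_flipsFrom_true_le_three (hsym : ∀ a b, J a b = J b a)
    (hJ : ∀ a b, Adj a b → J a b ∈ Set.Icc (0 : ℝ) 1) (hh : 1.5 < h)
    (hseq : IsLegalFlipSeqDis J h η m) (x : Site) :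
    (flipsFrom (η · x) m true).encard ≤ 3 := by
  have hJ₀ : ∀ a b, Adj a b → 0 ≤ J a b := fun a b hab => (hJ a b hab).1
  refine (Set.encard_le_add_one_of_diff_min fun p₀ hp₀ hmin => ?_).trans
    (by norm_num : (2 : ℕ∞) + 1 ≤ 3)
  obtain ⟨y, hy, hJy⟩ := exists_half_lt_coupling hJ hh
    ((hseq.legalDis_of_mem_flipsFrom hp₀).1.localField_lt hp₀.2.1)
  obtain ⟨v, w, hperm⟩ := nbrs_perm_of_mem hy
  have hflip : ∀ p ∈ flipsFrom (η · x) m true \ {p₀}, ∃ u ∈ nbrs x, ∃ k < p,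
      (∀ p' ∈ flipsFrom (η · x) m true, p' < p → p' < k) ∧
        k ∈ flipsFrom (η · u) m true ∧ η k x = true := fun p hp =>
    hseq.exists_flip_nbr hJ₀ hp₀ hp.1 ((hmin p hp.1).lt_of_ne (Ne.symm hp.2))
  choose! f hfx k hkp hk hfk hkx using hflip
  have hmaps : Set.MapsTo f (flipsFrom (η · x) m true \ {p₀}) {v, w} := by
    intro p hp
    have hJf := (hseq.legalDis_of_mem_flipsFrom (hfk p hp)).1.coupling_lt hJ (hfk p hp).2.1
      (mem_nbrs_comm.mp (hfx p hp)) (hkx p hp)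
    have hfy : f p ≠ y := fun hfy => by linarith [hsym x (f p), hfy ▸ hJy]
    simpa [hfy] using hperm.subset (hfx p hp)
  have hinj : Set.InjOn f (flipsFrom (η · x) m true \ {p₀}) := by
    intro p₁ h₁ p₂ h₂ hf
    by_contra! hne
    wlog hlt : p₁ < p₂ generalizing p₁ p₂
    · exact this h₂ h₁ hf.symm hne.symm (hne.lt_or_gt.resolve_left hlt)
    refine hseq.notMem_flipsFrom_true_of_lt hsym hJ hh (hfk p₁ h₁)
      (mem_nbrs_comm.mp (hfx p₁ h₁)) (hkx p₁ h₁) ((hkp p₁ h₁).trans (hk p₂ h₂ p₁ h₁.1 hlt)) ?_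
    exact hf ▸ hfk p₂ h₂
  calc (flipsFrom (η · x) m true \ {p₀}).encard ≤ ({v, w} : Set Site).encard :=
        Set.encard_le_encard_of_injOn hmaps hinj
    _ ≤ 2 := by simpa [one_add_one_eq_two] using Set.encard_insert_le {w} v

end IsLegalFlipSeqDis

theorem stmt5_general (J : Site → Site → ℝ) (hsym : ∀ a b : Site, J a b = J b a)
    (hJ : ∀ a b : Site, Adj a b → J a b ∈ Set.Icc (0 : ℝ) 1)
    (h : ℝ) (hh : 1.5 < h)
    (η : ℕ → Config) (m : ℕ∞)
    (hseq : IsLegalFlipSeqDis J h η m) (x : Site) :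
    {n : ℕ | (n : ℕ∞) + 1 ≤ m ∧ η (n + 1) x ≠ η n x}.encard ≤ 7 := by
  have hdown := hseq.encard_flipsFrom_true_le_three hsym hJ hh x
  have hup : (flipsFrom (η · x) m false).encard ≤ (flipsFrom (η · x) m true).encard + 1 :=
    encard_flipsFrom_le_add_one _ m false
  have hsplit : {n : ℕ | (n : ℕ∞) + 1 ≤ m ∧ η (n + 1) x ≠ η n x} ⊆
      flipsFrom (η · x) m true ∪ flipsFrom (η · x) m false := by
    rintro n ⟨hn, hflip⟩
    cases hx : η n x
    · exact .inr ⟨hn, hx, hx ▸ hflip⟩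
    · exact .inl ⟨hn, hx, hx ▸ hflip⟩
  calc _ ≤ (flipsFrom (η · x) m true ∪ flipsFrom (η · x) m false).encard :=
        Set.encard_le_encard hsplit
    _ ≤ (flipsFrom (η · x) m true).encard + (flipsFrom (η · x) m false).encard :=
        Set.encard_union_le _ _
    _ ≤ 3 + (3 + 1) := add_le_add hdown (hup.trans (add_le_add_left hdown 1))
    _ = 7 := by norm_num

/-- in the disordered ferromagnet on ℍ with couplings J_{x,y} ∈ [0,1] and
external field h > 1.5, in every legal flip sequence (finite or infinite, from any initial
configuration `σ = η 0`) every site is flipped at most 7 times. -/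
theorem stmt5 (J : Site → Site → ℝ) (hsym : ∀ a b : Site, J a b = J b a)
    (hJ : ∀ a b : Site, Adj a b → J a b ∈ Set.Icc (0 : ℝ) 1)
    (h : ℝ) (hh : 1.5 < h)
    (σ : Config) (η : ℕ → Config) (m : ℕ∞) (h0 : η 0 = σ)
    (hseq : IsLegalFlipSeqDis J h η m) (x : Site) :
    {n : ℕ | (n : ℕ∞) + 1 ≤ m ∧ η (n + 1) x ≠ η n x}.encard ≤ 7 :=
  stmt5_general J hsym hJ h hh η m hseq x
end

section
/- Suppose that in the initial configuration σ⁰ there is a doubly-infinite self-avoiding path (…, y_{−1}, y_0, y_1, …) in the triangular lattice B (consecutive sites B-neighbors) all of whose sites have spin +1. Then under the synchronous dynamics, for every n ≥ 1 the configuration σⁿ contains a doubly-infinite self-avoiding path in ℍ all of whose sites have spin +1; in particular there is an infinite cluster of +1 spins in σⁿ for every n ≥ 1. -/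
open MeasureTheory ENNReal

/-- The majority value among the three spins `σ y`, `y ∈ N(x)`. -/
def maj (σ : Config) (x : Site) : Bool :=
  decide (2 ≤ (nbrs x).countP (fun y => σ y))

/-- One step of the synchronous dynamics: at even times `n` all sites of the sublattice
`A = {x : i+j odd}` are simultaneously updated to the majority value of their neighbors;
at odd times the sites of `B = {x : i+j even}` are updated. -/
def syncStep (n : ℕ) (σ : Config) : Config := fun x =>
  if (Even n ∧ ¬ Even (x.1 + x.2)) ∨ (¬ Even n ∧ Even (x.1 + x.2)) then maj σ x
  else σ x

/-- The synchronous dynamics: `evolve σ0 n` is the configuration σⁿ. -/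
def evolve (σ0 : Config) : ℕ → Config
  | 0 => σ0
  | n + 1 => syncStep n (evolve σ0 n)

/-- `P` is the i.i.d. Bernoulli(λ) product measure on configurations:
a probability measure giving each finite cylinder its product probability,
where each site is `+1` (i.e. `true`) with probability λ. -/
def IsBernoulliProduct (l : ℝ) (P : Measure Config) : Prop :=
  IsProbabilityMeasure P ∧
    ∀ (s : Finset Site) (f : Site → Bool),
      P {σ : Config | ∀ x ∈ s, σ x = f x} =
        ∏ x ∈ s, ENNReal.ofReal (if f x then l else 1 - l)

/-- Two sites are B-neighbors (adjacent in the triangular lattice on a sublattice of ℍ) if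
they are distinct and at graph distance 2 in ℍ, i.e. have a common ℍ-neighbor. -/
def BAdj (y y' : Site) : Prop := y ≠ y' ∧ ∃ z, Adj y z ∧ Adj y' z

/-- The cluster of `x` in `σ`: the connected component of `x` in the subgraph of ℍ induced
by the sites carrying the same spin as `x`. -/
def cluster (σ : Config) (x : Site) : Set Site :=
  {y | Relation.ReflTransGen (fun a b => Adj a b ∧ σ b = σ x) x y}

/-- `σ` has an infinite cluster of spin `s` (`true` = +1, `false` = −1). -/
def HasInfiniteCluster (σ : Config) (s : Bool) : Prop :=
  ∃ x, σ x = s ∧ (cluster σ x).Infinite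

lemma mem_nbrs_iff {x y : Site} : y ∈ nbrs x ↔
    ((y.2 = x.2 ∧ (y.1 = x.1 - 1 ∨ y.1 = x.1 + 1)) ∨
      (y.1 = x.1 ∧ (((x.1 + x.2) % 2 = 0 ∧ y.2 = x.2 + 1) ∨
        ((x.1 + x.2) % 2 ≠ 0 ∧ y.2 = x.2 - 1)))) := by
  obtain ⟨i, j⟩ := x; obtain ⟨a, b⟩ := y
  by_cases h : (i + j) % 2 = 0
  · simp [nbrs, Int.even_iff, h, Prod.ext_iff]
    omega
  · simp [nbrs, Int.even_iff, h, Prod.ext_iff]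
    omega

lemma nbrs_symm {x y : Site} (h : y ∈ nbrs x) : x ∈ nbrs y := by
  rw [mem_nbrs_iff] at h ⊢; omega

lemma nbrs_parity {x y : Site} (h : y ∈ nbrs x) :
    Even (x.1 + x.2) ↔ ¬ Even (y.1 + y.2) := by
  rw [mem_nbrs_iff] at h
  rw [Int.even_iff, Int.even_iff]
  omega

lemma nbrs_unique {x x' z w : Site} (hzx : z ∈ nbrs x) (hzx' : z ∈ nbrs x')
    (hwx : w ∈ nbrs x) (hwx' : w ∈ nbrs x') (hzw : z ≠ w) : x = x' := by
  rw [mem_nbrs_iff] at hzx hzx' hwx hwx'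
  rw [Ne, Prod.ext_iff, not_and_or] at hzw
  rw [Prod.ext_iff]
  omega

lemma deg_three {w a b c d : Site} (ha : w ∈ nbrs a) (hb : w ∈ nbrs b)
    (hc : w ∈ nbrs c) (hd : w ∈ nbrs d) (hab : a ≠ b) (hac : a ≠ c) (had : a ≠ d)
    (hbc : b ≠ c) (hbd : b ≠ d) (hcd : c ≠ d) : False := by
  have hsub : ({a, b, c, d} : Finset Site) ⊆ (nbrs w).toFinset := by
    intro z hz
    rw [List.mem_toFinset]
    simp only [Finset.mem_insert, Finset.mem_singleton] at hz
    rcases hz with rfl | rfl | rfl | rfl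
    · exact nbrs_symm ha
    · exact nbrs_symm hb
    · exact nbrs_symm hc
    · exact nbrs_symm hd
  have hcard : ({a, b, c, d} : Finset Site).card = 4 := by
    rw [Finset.card_insert_of_notMem (by simp [hab, hac, had]),
      Finset.card_insert_of_notMem (by simp [hbc, hbd]),
      Finset.card_insert_of_notMem (by simp [hcd]), Finset.card_singleton]
  have h1 : 4 ≤ (nbrs w).toFinset.card := hcard ▸ Finset.card_le_card hsub
  have h2 : (nbrs w).toFinset.card ≤ (nbrs w).length := List.toFinset_card_le _
  have h3 : (nbrs w).length = 3 := rfl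
  omega

lemma two_le_countP {α : Type*} [DecidableEq α] {l : List α} {f : α → Bool} {y y' : α}
    (hy : y ∈ l) (hy' : y' ∈ l) (hne : y ≠ y') (h1 : f y = true) (h2 : f y' = true) :
    2 ≤ l.countP f := by
  rw [List.countP_eq_length_filter]
  have hy2 : y ∈ (l.filter f).toFinset := by
    rw [List.mem_toFinset]; exact List.mem_filter.mpr ⟨hy, h1⟩
  have hy2' : y' ∈ (l.filter f).toFinset := by
    rw [List.mem_toFinset]; exact List.mem_filter.mpr ⟨hy', h2⟩
  have hsub : ({y, y'} : Finset α) ⊆ (l.filter f).toFinset := by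
    intro z hz
    rcases Finset.mem_insert.mp hz with rfl | hz
    · exact hy2
    · rw [Finset.mem_singleton] at hz; subst hz; exact hy2'
  have hcard : ({y, y'} : Finset α).card = 2 := by
    rw [Finset.card_insert_of_notMem (by simpa using hne), Finset.card_singleton]
  calc 2 = ({y, y'} : Finset α).card := hcard.symm
    _ ≤ (l.filter f).toFinset.card := Finset.card_le_card hsub
    _ ≤ (l.filter f).length := List.toFinset_card_le _

lemma maj_true {σ : Config} {x y y' : Site} (hy : y ∈ nbrs x) (hy' : y' ∈ nbrs x)
    (hne : y ≠ y') (h1 : σ y = true) (h2 : σ y' = true) : maj σ x = true := by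
  have := two_le_countP (f := fun z => σ z) hy hy' hne h1 h2
  simpa [maj] using this

lemma syncStep_frozen {n : ℕ} {σ : Config} {x : Site} (h : Even n ↔ Even (x.1 + x.2)) :
    syncStep n σ x = σ x := by
  simp only [syncStep]
  rw [if_neg]
  tauto

lemma syncStep_maj {n : ℕ} {σ : Config} {x : Site} (h : ¬ (Even n ↔ Even (x.1 + x.2))) :
    syncStep n σ x = maj σ x := by
  simp only [syncStep]
  rw [if_pos]
  tauto

def nxtIdx (ζ : ℤ → Site) (m : ℤ) : ℤ := if ζ m = ζ (m + 1) then m + 2 else m + 1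
def prvIdx (ζ : ℤ → Site) (m : ℤ) : ℤ := if ζ (m - 2) = ζ (m - 1) then m - 2 else m - 1
def baseIdx (ζ : ℤ → Site) : ℤ := if ζ (-1) = ζ 0 then 1 else 0
def fwdIdx (ζ : ℤ → Site) : ℕ → ℤ
  | 0 => baseIdx ζ
  | n + 1 => nxtIdx ζ (fwdIdx ζ n)
def bwdIdx (ζ : ℤ → Site) : ℕ → ℤ
  | 0 => baseIdx ζ
  | n + 1 => prvIdx ζ (bwdIdx ζ n)
def idx (ζ : ℤ → Site) (k : ℤ) : ℤ :=
  if 0 ≤ k then fwdIdx ζ k.toNat else bwdIdx ζ (-k).toNat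

section Idx
variable {ζ : ℤ → Site}


lemma good_nxt (noCC : ∀ a : ℤ, ¬(ζ (a - 1) = ζ a ∧ ζ a = ζ (a + 1))) (m : ℤ) : ζ (nxtIdx ζ m - 1) ≠ ζ (nxtIdx ζ m) := by
  unfold nxtIdx
  split_ifs with h
  · intro h2
    have e1 : m + 2 - 1 = m + 1 := by ring
    rw [e1] at h2
    have e2 : m + 1 + 1 = m + 2 := by ring
    exact noCC (m + 1) ⟨by simpa using h, by rw [e2]; exact h2⟩
  · intro h2
    have e1 : m + 1 - 1 = m := by ring
    rw [e1] at h2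
    exact h h2

lemma good_prv (noCC : ∀ a : ℤ, ¬(ζ (a - 1) = ζ a ∧ ζ a = ζ (a + 1))) (m : ℤ) : ζ (prvIdx ζ m - 1) ≠ ζ (prvIdx ζ m) := by
  unfold prvIdx
  split_ifs with h
  · intro h2
    have e : m - 2 + 1 = m - 1 := by ring
    exact noCC (m - 2) ⟨h2, by rw [e]; exact h⟩
  · intro h2
    have e1 : m - 1 - 1 = m - 2 := by ring
    rw [e1] at h2
    exact h h2

lemma good_base (noCC : ∀ a : ℤ, ¬(ζ (a - 1) = ζ a ∧ ζ a = ζ (a + 1))) : ζ (baseIdx ζ - 1) ≠ ζ (baseIdx ζ) := by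
  unfold baseIdx
  split_ifs with h
  · intro h2
    exact noCC 0 ⟨by simpa using h, by simpa using h2⟩
  · intro h2
    simp at h2
    exact h h2

lemma good_idx (noCC : ∀ a : ℤ, ¬(ζ (a - 1) = ζ a ∧ ζ a = ζ (a + 1))) (k : ℤ) : ζ (idx ζ k - 1) ≠ ζ (idx ζ k) := by
  unfold idx
  split_ifs with h
  · cases hn : k.toNat with
    | zero => rw [fwdIdx]; exact good_base noCC
    | succ n => rw [fwdIdx]; exact good_nxt noCC _
  · cases hn : (-k).toNat with
    | zero => rw [bwdIdx]; exact good_base noCC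
    | succ n => rw [bwdIdx]; exact good_prv noCC _

lemma nxt_prv (m : ℤ) (hm : ζ (m - 1) ≠ ζ m) : nxtIdx ζ (prvIdx ζ m) = m := by
  unfold nxtIdx prvIdx
  split_ifs with h h2 h3
  · ring
  · exfalso
    apply h2
    have e : m - 2 + 1 = m - 1 := by ring
    rw [e]
    exact h
  · exfalso
    apply hm
    have e : m - 1 + 1 = m := by ring
    rw [e] at h3
    exact h3
  · ring

lemma idx_succ (noCC : ∀ a : ℤ, ¬(ζ (a - 1) = ζ a ∧ ζ a = ζ (a + 1))) (k : ℤ) : idx ζ (k + 1) = nxtIdx ζ (idx ζ k) := by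
  rcases le_or_gt 0 k with hk | hk
  · have h1 : idx ζ k = fwdIdx ζ k.toNat := by unfold idx; rw [if_pos hk]
    have h2 : idx ζ (k + 1) = fwdIdx ζ (k.toNat + 1) := by
      unfold idx
      rw [if_pos (by omega)]
      congr 1
      omega
    rw [h1, h2, fwdIdx]
  · -- k < 0, so k + 1 ≤ 0
    have hgood : ζ (idx ζ (k + 1) - 1) ≠ ζ (idx ζ (k + 1)) := good_idx noCC (k + 1)
    have h1 : idx ζ k = prvIdx ζ (idx ζ (k + 1)) := by
      unfold idx
      rcases lt_or_ge (k + 1) 0 with h | h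
      · rw [if_neg (by omega), if_neg (by omega)]
        have e : (-k).toNat = (-(k+1)).toNat + 1 := by omega
        rw [e, bwdIdx]
      · have hk1 : k + 1 = 0 := by omega
        rw [if_neg (by omega), if_pos h, hk1]
        have e1 : (-k).toNat = 1 := by omega
        have e2 : (0 : ℤ).toNat = 0 := rfl
        rw [e1, e2, bwdIdx, bwdIdx, fwdIdx]
    rw [h1, nxt_prv _ hgood]

lemma nxtIdx_lt (m : ℤ) : m < nxtIdx ζ m ∧ nxtIdx ζ m ≤ m + 2 := by
  unfold nxtIdx; split_ifs <;> omega

lemma idx_strictMono (noCC : ∀ a : ℤ, ¬(ζ (a - 1) = ζ a ∧ ζ a = ζ (a + 1))) : StrictMono (idx ζ) := by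
  apply strictMono_int_of_lt_succ
  intro k
  rw [idx_succ noCC]
  exact (nxtIdx_lt (ζ := ζ) (idx ζ k)).1

end Idx


/-- if in σ⁰ there is a doubly-infinite self-avoiding path in the triangular
sublattice `B` (consecutive sites B-neighbors) all of whose sites have spin +1, then for
every n ≥ 1 the configuration σⁿ of the synchronous dynamics contains a doubly-infinite
self-avoiding path in ℍ all of whose sites have spin +1; in particular σⁿ has an infinite
cluster of +1 spins. -/
theorem stmt14 (σ0 : Config) (p : ℤ → Site) (hinj : Function.Injective p)
    (hB : ∀ k : ℤ, Even ((p k).1 + (p k).2))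
    (hadj : ∀ k : ℤ, BAdj (p k) (p (k + 1)))
    (hplus : ∀ k : ℤ, σ0 (p k) = true) :
    ∀ n : ℕ, 1 ≤ n →
      (∃ q : ℤ → Site, Function.Injective q ∧ (∀ k : ℤ, Adj (q k) (q (k + 1))) ∧
        ∀ k : ℤ, evolve σ0 n (q k) = true) ∧
      HasInfiniteCluster (evolve σ0 n) true := by
  have hadj' : ∀ k : ℤ, ∃ z, z ∈ nbrs (p k) ∧ z ∈ nbrs (p (k + 1)) := fun k => (hadj k).2
  choose ζ hz1 hz2 using hadj'
  have hpne : ∀ {a b : ℤ}, a ≠ b → p a ≠ p b := fun hab h => hab (hinj h)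
  -- no two consecutive "bad" indices
  have noCC : ∀ a : ℤ, ¬(ζ (a - 1) = ζ a ∧ ζ a = ζ (a + 1)) := by
    rintro a ⟨h1, h2⟩
    have e1 : a - 1 + 1 = a := by ring
    have e2 : a + 1 + 1 = a + 2 := by ring
    have m1 : ζ a ∈ nbrs (p (a - 1)) := h1 ▸ hz1 (a - 1)
    have m2 : ζ a ∈ nbrs (p a) := hz1 a
    have m3 : ζ a ∈ nbrs (p (a + 1)) := hz2 a
    have m4 : ζ a ∈ nbrs (p (a + 2)) := by
      have := hz2 (a + 1); rw [e2] at this; rw [h2]; exact this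
    exact deg_three m1 m2 m3 m4 (hpne (by omega)) (hpne (by omega)) (hpne (by omega))
      (hpne (by omega)) (hpne (by omega)) (hpne (by omega))
  have hmono : StrictMono (idx ζ) := idx_strictMono noCC
  have hidxne : ∀ {a b : ℤ}, a ≠ b → idx ζ a ≠ idx ζ b := fun hab h => hab (hmono.injective h)
  -- the chosen common neighbor works for consecutive chosen indices
  have hWP : ∀ k : ℤ, ζ (idx ζ k) ∈ nbrs (p (idx ζ k)) := fun k => hz1 _
  have hWP' : ∀ k : ℤ, ζ (idx ζ k) ∈ nbrs (p (idx ζ (k + 1))) := by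
    intro k
    rw [idx_succ noCC k]
    unfold nxtIdx
    split_ifs with h
    · have e : idx ζ k + 2 = idx ζ k + 1 + 1 := by ring
      rw [e, h]
      exact hz2 _
    · exact hz2 _
  have hWne : ∀ k : ℤ, ζ (idx ζ k) ≠ ζ (idx ζ (k + 1)) := by
    intro k heq
    have hs := idx_succ noCC k
    unfold nxtIdx at hs
    split_ifs at hs with h
    · -- skipped case: ζ (idx k) adjacent to four consecutive sites
      set m := idx ζ k with hm
      have e2 : m + 1 + 1 = m + 2 := by ring
      have e3 : m + 2 + 1 = m + 3 := by ring
      have m1 : ζ m ∈ nbrs (p m) := hz1 m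
      have m2 : ζ m ∈ nbrs (p (m + 1)) := hz2 m
      have m3 : ζ m ∈ nbrs (p (m + 2)) := by
        have := hz2 (m + 1); rw [e2] at this; rw [h]; exact this
      have m4 : ζ m ∈ nbrs (p (m + 3)) := by
        have := hz2 (m + 2); rw [e3] at this
        rw [heq, hs]; exact this
      exact deg_three m1 m2 m3 m4 (hpne (by omega)) (hpne (by omega)) (hpne (by omega))
        (hpne (by omega)) (hpne (by omega)) (hpne (by omega))
    · have hg := good_idx noCC (k + 1)
      rw [hs] at hg heq
      have e : idx ζ k + 1 - 1 = idx ζ k := by ring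
      rw [e] at hg
      exact hg heq
  have hWinj : Function.Injective fun k => ζ (idx ζ k) := by
    have key : ∀ k k' : ℤ, k < k' → ζ (idx ζ k) ≠ ζ (idx ζ k') := by
      intro k k' hlt heq
      rcases eq_or_lt_of_le (by omega : k + 1 ≤ k') with he | hlt2
      · rw [← he] at heq; exact hWne k heq
      · have m1 : ζ (idx ζ k) ∈ nbrs (p (idx ζ k)) := hWP k
        have m2 : ζ (idx ζ k) ∈ nbrs (p (idx ζ (k + 1))) := hWP' k
        have m3 : ζ (idx ζ k) ∈ nbrs (p (idx ζ k')) := heq ▸ hWP k'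
        have m4 : ζ (idx ζ k) ∈ nbrs (p (idx ζ (k' + 1))) := heq ▸ hWP' k'
        have o1 : idx ζ k < idx ζ (k + 1) := hmono (by omega)
        have o2 : idx ζ (k + 1) < idx ζ k' := hmono hlt2
        have o3 : idx ζ k' < idx ζ (k' + 1) := hmono (by omega)
        exact deg_three m1 m2 m3 m4 (hpne (by omega)) (hpne (by omega)) (hpne (by omega))
          (hpne (by omega)) (hpne (by omega)) (hpne (by omega))
    intro k k' h
    by_contra hne
    rcases lt_or_gt_of_ne hne with hlt | hlt
    · exact key k k' hlt h
    · exact key k' k hlt h.symm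
  have hWpar : ∀ k : ℤ, ¬ Even ((ζ (idx ζ k)).1 + (ζ (idx ζ k)).2) := by
    intro k
    have := nbrs_parity (hWP k)
    have hb := hB (idx ζ k)
    tauto
  -- spins stay + forever
  have hspin : ∀ n : ℕ, 1 ≤ n →
      (∀ k : ℤ, evolve σ0 n (p (idx ζ k)) = true) ∧
      (∀ k : ℤ, evolve σ0 n (ζ (idx ζ k)) = true) := by
    intro n hn
    induction n, hn using Nat.le_induction with
    | base =>
      constructor
      · intro k
        show syncStep 0 σ0 (p (idx ζ k)) = true
        rw [syncStep_frozen (iff_of_true (by norm_num) (hB _))]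
        exact hplus _
      · intro k
        show syncStep 0 σ0 (ζ (idx ζ k)) = true
        rw [syncStep_maj (by intro hiff; exact hWpar k (hiff.mp (by norm_num)))]
        exact maj_true (nbrs_symm (hWP k)) (nbrs_symm (hWP' k)) (hpne (hidxne (by omega)))
          (hplus _) (hplus _)
    | succ n hn ih =>
      obtain ⟨ihP, ihW⟩ := ih
      by_cases hpar : Even n
      · constructor
        · intro k
          show syncStep n (evolve σ0 n) (p (idx ζ k)) = true
          rw [syncStep_frozen (iff_of_true hpar (hB _))]
          exact ihP k
        · intro k
          show syncStep n (evolve σ0 n) (ζ (idx ζ k)) = true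
          rw [syncStep_maj (by intro hiff; exact hWpar k (hiff.mp hpar))]
          exact maj_true (nbrs_symm (hWP k)) (nbrs_symm (hWP' k)) (hpne (hidxne (by omega)))
            (ihP k) (ihP (k + 1))
      · constructor
        · intro k
          show syncStep n (evolve σ0 n) (p (idx ζ k)) = true
          rw [syncStep_maj (by intro hiff; exact hpar (hiff.mpr (hB _)))]
          have e : k - 1 + 1 = k := by ring
          have m1 : ζ (idx ζ (k - 1)) ∈ nbrs (p (idx ζ k)) := by
            have := hWP' (k - 1); rwa [e] at this
          have hne : ζ (idx ζ (k - 1)) ≠ ζ (idx ζ k) := by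
            have := hWne (k - 1); rwa [e] at this
          exact maj_true m1 (hWP k) hne (ihW (k - 1)) (ihW k)
        · intro k
          show syncStep n (evolve σ0 n) (ζ (idx ζ k)) = true
          rw [syncStep_frozen (iff_of_false hpar (hWpar k))]
          exact ihW k
  -- the doubly-infinite path in ℍ
  set q : ℤ → Site := fun m => if Even m then p (idx ζ (m / 2)) else ζ (idx ζ (m / 2)) with hq
  have hq_even : ∀ t : ℤ, q (2 * t) = p (idx ζ t) := by
    intro t
    have h1 : Even (2 * t) := ⟨t, by ring⟩
    have h2 : 2 * t / 2 = t := by omega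
    simp [hq, h1, h2]
  have hq_odd : ∀ t : ℤ, q (2 * t + 1) = ζ (idx ζ t) := by
    intro t
    have h1 : ¬ Even (2 * t + 1) := by rw [Int.even_iff]; omega
    have h2 : (2 * t + 1) / 2 = t := by omega
    simp [hq, h1, h2]
  have hqadj : ∀ m : ℤ, Adj (q m) (q (m + 1)) := by
    intro m
    rcases Int.even_or_odd m with ⟨t, ht⟩ | ⟨t, ht⟩
    · have hm : m = 2 * t := by omega
      rw [hm, show (2 * t + 1 : ℤ) = 2 * t + 1 from rfl, hq_even, hq_odd]
      exact hWP t
    · have hm : m = 2 * t + 1 := by omega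
      rw [hm, show (2 * t + 1 + 1 : ℤ) = 2 * (t + 1) from by ring, hq_odd, hq_even]
      exact nbrs_symm (hWP' t)
  have hqinj : Function.Injective q := by
    intro m m' h
    rcases Int.even_or_odd m with ⟨t, ht⟩ | ⟨t, ht⟩ <;>
      rcases Int.even_or_odd m' with ⟨t', ht'⟩ | ⟨t', ht'⟩
    · have hm : m = 2 * t := by omega
      have hm' : m' = 2 * t' := by omega
      rw [hm, hm', hq_even, hq_even] at h
      have := hmono.injective (hinj h)
      omega
    · have hm : m = 2 * t := by omega
      have hm' : m' = 2 * t' + 1 := by omega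
      rw [hm, hm', hq_even, hq_odd] at h
      exact absurd (h ▸ hB (idx ζ t)) (hWpar t')
    · have hm : m = 2 * t + 1 := by omega
      have hm' : m' = 2 * t' := by omega
      rw [hm, hm', hq_odd, hq_even] at h
      exact absurd (h ▸ hB (idx ζ t')) (hWpar t)
    · have hm : m = 2 * t + 1 := by omega
      have hm' : m' = 2 * t' + 1 := by omega
      rw [hm, hm', hq_odd, hq_odd] at h
      have := hWinj h
      omega
  intro n hn
  obtain ⟨hsP, hsW⟩ := hspin n hn
  have hqspin : ∀ m : ℤ, evolve σ0 n (q m) = true := by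
    intro m
    rcases Int.even_or_odd m with ⟨t, ht⟩ | ⟨t, ht⟩
    · have hm : m = 2 * t := by omega
      rw [hm, hq_even]; exact hsP t
    · have hm : m = 2 * t + 1 := by omega
      rw [hm, hq_odd]; exact hsW t
  refine ⟨⟨q, hqinj, hqadj, hqspin⟩, q 0, hqspin 0, ?_⟩
  -- the range of q lies in the cluster of q 0
  set σ := evolve σ0 n with hσ
  have hR : ∀ m : ℤ, Relation.ReflTransGen (fun a b => Adj a b ∧ σ b = σ (q 0)) (q 0) (q m) := by
    have hstep : ∀ a b : Site, Adj a b → (∀ m, σ (q m) = true) → True := fun _ _ _ _ => trivial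
    have h0 : σ (q 0) = true := hqspin 0
    have fwd : ∀ j : ℕ, Relation.ReflTransGen
        (fun a b => Adj a b ∧ σ b = σ (q 0)) (q 0) (q j) := by
      intro j
      induction j with
      | zero => exact Relation.ReflTransGen.refl
      | succ j ih =>
        refine ih.tail ⟨?_, by rw [h0]; exact hqspin _⟩
        have e : ((j + 1 : ℕ) : ℤ) = (j : ℤ) + 1 := by push_cast; ring
        rw [e]
        exact hqadj j
    have bwd : ∀ j : ℕ, Relation.ReflTransGen
        (fun a b => Adj a b ∧ σ b = σ (q 0)) (q 0) (q (-(j : ℤ))) := by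
      intro j
      induction j with
      | zero => exact Relation.ReflTransGen.refl
      | succ j ih =>
        refine ih.tail ⟨?_, by rw [h0]; exact hqspin _⟩
        have e : -(j : ℤ) = (-((j + 1 : ℕ) : ℤ)) + 1 := by push_cast; ring
        have := hqadj (-((j + 1 : ℕ) : ℤ))
        rw [← e] at this
        exact nbrs_symm this
    intro m
    rcases le_or_gt 0 m with hm | hm
    · have : m = (m.toNat : ℤ) := by omega
      rw [this]; exact fwd m.toNat
    · have : m = -((-m).toNat : ℤ) := by omega
      rw [this]; exact bwd (-m).toNat
  have hsub : Set.range q ⊆ cluster σ (q 0) := by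
    rintro _ ⟨m, rfl⟩
    exact hR m
  exact ((Set.infinite_range_of_injective hqinj).mono hsub)
end
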